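/- arXiv:1703.00507 — 2 statements merged into one kernel-verified Lean document; each statement's English description precedes it below -/
import Mathlib

section
/- For n ≥ 2 and x ≥ 1, the function φ(x) = 1/(n + 1 + sin x) satisfies (φ''(x) − V'(x)φ'(x) − V''(x)φ(x)) ≤ M₁ for some constant M₁ > 0, where V'(x) = x^n(n+1+sin x). -/
/-!
Write `d = n + 1 + sin x`, so that `φ = 1 / d` and `V' = x ^ n * d`. Then `V' φ = x ^ n`, hence
`V'' φ + V' φ' = (V' φ)' = n x ^ (n - 1) ≥ 0`, and the expression is at most
`φ'' = (d sin x + 2 cos² x) / d³`, which is at most `3` because `d ≥ 1`.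
-/

open Real Set

section InvConstAddSin

variable {c : ℝ}

theorem const_add_sin_pos (hc : 1 < c) (x : ℝ) : 0 < c + sin x := by
  linarith [neg_one_le_sin x]

theorem hasDerivAt_inv_const_add_sin (hc : 1 < c) (x : ℝ) :
    HasDerivAt (fun y => (c + sin y)⁻¹) (-cos x / (c + sin x) ^ 2) x :=
  ((hasDerivAt_sin x).const_add c).inv (const_add_sin_pos hc x).ne'

theorem deriv_inv_const_add_sin (hc : 1 < c) :
    deriv (fun y => (c + sin y)⁻¹) = fun x => -cos x / (c + sin x) ^ 2 :=
  funext fun x => (hasDerivAt_inv_const_add_sin hc x).deriv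

theorem deriv_deriv_inv_const_add_sin (hc : 1 < c) (x : ℝ) :
    deriv (deriv fun y => (c + sin y)⁻¹) x
      = (sin x * (c + sin x) + 2 * cos x ^ 2) / (c + sin x) ^ 3 := by
  have hd := (const_add_sin_pos hc x).ne'
  have hderiv := (hasDerivAt_cos x).fun_neg.fun_div
    (((hasDerivAt_sin x).const_add c).fun_pow 2) (pow_ne_zero 2 hd)
  rw [deriv_inv_const_add_sin hc, hderiv.deriv]
  field_simp
  ring

theorem deriv_deriv_inv_const_add_sin_le_three (hc : 2 ≤ c) (x : ℝ) :
    deriv (deriv fun y => (c + sin y)⁻¹) x ≤ 3 := by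
  have hd : 1 ≤ c + sin x := by linarith [neg_one_le_sin x]
  have hd3 : c + sin x ≤ (c + sin x) ^ 3 := le_self_pow₀ hd (by norm_num)
  rw [deriv_deriv_inv_const_add_sin (by linarith) x, div_le_iff₀ (by positivity)]
  nlinarith [mul_nonneg (sub_nonneg.2 (sin_le_one x)) (by linarith : 0 ≤ c + sin x),
    cos_sq_le_one x]

end InvConstAddSin

theorem phi_condition_bounded (n : ℕ) (hn : 2 ≤ n)
    (φ : ℝ → ℝ) (hφ : ∀ x, φ x = 1 / ((n : ℝ) + 1 + Real.sin x)) :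
    ∃ M₁ : ℝ, 0 < M₁ ∧ ∀ x : ℝ, 1 ≤ x →
      deriv (deriv φ) x - (x ^ n * ((n : ℝ) + 1 + Real.sin x)) * deriv φ x
        - ((n : ℝ) * x ^ (n - 1) * ((n : ℝ) + 1 + Real.sin x) + x ^ n * Real.cos x) * φ x
      ≤ M₁ := by
  have hc : (2 : ℝ) ≤ n + 1 := by norm_cast; omega
  obtain rfl : φ = fun y => ((n : ℝ) + 1 + sin y)⁻¹ := funext fun y => by rw [hφ, one_div]
  refine ⟨3, by norm_num, fun x hx => ?_⟩
  have hd := (const_add_sin_pos (c := (n : ℝ) + 1) (by linarith) x).ne'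
  have hdrift : (x ^ n * ((n : ℝ) + 1 + sin x)) * (-cos x / ((n : ℝ) + 1 + sin x) ^ 2)
      + ((n : ℝ) * x ^ (n - 1) * ((n : ℝ) + 1 + sin x) + x ^ n * cos x)
        * ((n : ℝ) + 1 + sin x)⁻¹ = (n : ℝ) * x ^ (n - 1) := by
    field_simp
    ring
  have hdrift_nonneg : 0 ≤ (n : ℝ) * x ^ (n - 1) := by
    have : 0 ≤ x := by linarith
    positivity
  have hφ'' := deriv_deriv_inv_const_add_sin_le_three hc x
  rw [deriv_inv_const_add_sin (by linarith)] at hφ'' ⊢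
  linarith
end

section
/- For n ≥ 2 and V with V'(x) = x^n(n+1+sin x) on x ≥ 0, the function u(x) = e^{V(x)} ∫_x^∞ (y − m) e^{-V(y)} dy tends to 0 as x → +∞, for any constant m. -/
/-!
Since `sin ≥ -1`, `V' t ≥ n t ^ n ≥ n x ^ n` for `t ≥ x ≥ 0`, so `V y - V x ≥ n x ^ n (y - x)`.
For `x ≥ m`, together with `y - m ≤ (x - m + 1) e^{y - x}` this dominates the integrand of `u x`
by `(x - m + 1) e^{-(n x ^ n - 1)(y - x)}`, whence
`0 ≤ u x ≤ (x - m + 1) / (n x ^ n - 1) ≤ (x - m + 1) / x ^ 2` for `x ≥ 1`.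
-/

open Real MeasureTheory Set Filter Topology

lemma exp_neg_mul_sub_eq (b x y : ℝ) : exp (-(b * (y - x))) = exp (b * x) * exp (-b * y) := by
  rw [← exp_add]; ring_nf

lemma integrableOn_Ici_exp_neg_mul_sub {b : ℝ} (hb : 0 < b) (x : ℝ) :
    IntegrableOn (fun y => exp (-(b * (y - x)))) (Ici x) := by
  simp_rw [exp_neg_mul_sub_eq]
  rw [integrableOn_Ici_iff_integrableOn_Ioi]
  exact (integrableOn_exp_mul_Ioi (neg_lt_zero.2 hb) x).const_mul _

lemma integral_Ici_exp_neg_mul_sub {b : ℝ} (hb : 0 < b) (x : ℝ) :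
    ∫ y in Ici x, exp (-(b * (y - x))) = b⁻¹ := by
  simp_rw [exp_neg_mul_sub_eq, integral_Ici_eq_integral_Ioi, integral_const_mul,
    integral_exp_mul_Ioi (neg_lt_zero.2 hb), neg_mul, exp_neg]
  field_simp [(exp_pos (b * x)).ne']

lemma mul_sub_le_sub_of_hasDerivAt_Ici {f f' : ℝ → ℝ} {a c : ℝ}
    (hf : ∀ t, a ≤ t → HasDerivAt f (f' t) t) (hc : ∀ t, a ≤ t → c ≤ f' t) {x y : ℝ}
    (hx : a ≤ x) (hxy : x ≤ y) : c * (y - x) ≤ f y - f x := by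
  refine (convex_Ici a).mul_sub_le_image_sub_of_le_deriv
    (fun t ht => (hf t ht).continuousAt.continuousWithinAt)
    (fun t ht => (hf t (interior_subset ht)).differentiableAt.differentiableWithinAt)
    (fun t ht => ?_) x hx y (hx.trans hxy) hxy
  rw [(hf t (interior_subset ht)).deriv]
  exact hc t (interior_subset ht)

lemma sub_le_mul_exp_sub {m x y : ℝ} (hm : m ≤ x) (hxy : x ≤ y) :
    y - m ≤ (x - m + 1) * exp (y - x) := by
  nlinarith [add_one_le_exp (y - x)]

lemma exp_mul_setIntegral_Ici_le {g : ℝ → ℝ} {m x c : ℝ} (hm : m ≤ x) (hc : 1 < c)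
    (hg : ∀ y, x ≤ y → c * (y - x) ≤ g y - g x)
    (hint : IntegrableOn (fun y => (y - m) * exp (-g y)) (Ici x)) :
    exp (g x) * ∫ y in Ici x, (y - m) * exp (-g y) ≤ (x - m + 1) / (c - 1) := by
  have hc' : 0 < c - 1 := sub_pos.2 hc
  have hbound : ∀ y ∈ Ici x, exp (g x) * ((y - m) * exp (-g y))
      ≤ (x - m + 1) * exp (-((c - 1) * (y - x))) := by
    intro y hy
    have hdecay : exp (g x) * exp (-g y) ≤ exp (-(c * (y - x))) := by
      rw [← exp_add, exp_le_exp]; linarith [hg y hy]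
    calc exp (g x) * ((y - m) * exp (-g y))
        = (y - m) * (exp (g x) * exp (-g y)) := by ring
      _ ≤ ((x - m + 1) * exp (y - x)) * exp (-(c * (y - x))) :=
          mul_le_mul (sub_le_mul_exp_sub hm hy) hdecay (by positivity) (by positivity)
      _ = (x - m + 1) * exp (-((c - 1) * (y - x))) := by
          rw [mul_assoc, ← exp_add]; ring_nf
  calc exp (g x) * ∫ y in Ici x, (y - m) * exp (-g y)
      = ∫ y in Ici x, exp (g x) * ((y - m) * exp (-g y)) := (integral_const_mul _ _).symm
    _ ≤ ∫ y in Ici x, (x - m + 1) * exp (-((c - 1) * (y - x))) :=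
        setIntegral_mono_on (hint.const_mul _)
          ((integrableOn_Ici_exp_neg_mul_sub hc' x).const_mul _) measurableSet_Ici hbound
    _ = (x - m + 1) / (c - 1) := by
        rw [integral_const_mul, integral_Ici_exp_neg_mul_sub hc', div_eq_mul_inv]

lemma tendsto_sub_add_one_div_sq_atTop (m : ℝ) :
    Tendsto (fun x : ℝ => (x - m + 1) / x ^ 2) atTop (𝓝 0) := by
  have h : Tendsto (fun x : ℝ => x⁻¹ + (1 - m) * x⁻¹ ^ 2) atTop (𝓝 (0 + (1 - m) * 0 ^ 2)) :=
    tendsto_inv_atTop_zero.add (tendsto_inv_atTop_zero.pow 2 |>.const_mul _)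
  rw [zero_add, zero_pow two_ne_zero, mul_zero] at h
  refine h.congr' ?_
  filter_upwards [eventually_ne_atTop 0] with x hx
  field_simp
  ring

theorem u_tendsto_zero_general (n : ℕ) (hn : 2 ≤ n) (m : ℝ) (V : ℝ → ℝ)
    (hV : ∀ x : ℝ, 0 ≤ x → HasDerivAt V (x ^ n * ((n : ℝ) + 1 + Real.sin x)) x)
    (hint : IntegrableOn (fun y => (y - m) * Real.exp (-V y)) (Set.Ici (0 : ℝ))) :
    Tendsto (fun x : ℝ => Real.exp (V x) * ∫ y in Set.Ici x, (y - m) * Real.exp (-V y))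
      atTop (nhds 0) := by
  have hslope : ∀ x t : ℝ, 0 ≤ x → x ≤ t → n * x ^ n ≤ t ^ n * ((n : ℝ) + 1 + sin t) :=
    fun x t hx hxt => by
      nlinarith [pow_le_pow_left₀ hx hxt n, pow_nonneg (hx.trans hxt) n, neg_one_le_sin t]
  have hsq : ∀ x : ℝ, 1 ≤ x → x ^ 2 ≤ n * x ^ n - 1 := fun x hx => by
    have hn' : (2 : ℝ) ≤ n := by exact_mod_cast hn
    nlinarith [pow_le_pow_right₀ hx hn]
  refine squeeze_zero' ?_ ?_ (tendsto_sub_add_one_div_sq_atTop m)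
  · filter_upwards [eventually_ge_atTop m] with x hx
    refine mul_nonneg (exp_pos _).le (setIntegral_nonneg measurableSet_Ici fun y hy => ?_)
    exact mul_nonneg (by linarith [mem_Ici.1 hy]) (exp_pos _).le
  · filter_upwards [eventually_ge_atTop m, eventually_ge_atTop 1] with x hxm hx1
    have hx0 : (0 : ℝ) ≤ x := zero_le_one.trans hx1
    have hc : x ^ 2 ≤ n * x ^ n - 1 := hsq x hx1
    calc exp (V x) * ∫ y in Ici x, (y - m) * exp (-V y)
        ≤ (x - m + 1) / (n * x ^ n - 1) :=
          exp_mul_setIntegral_Ici_le hxm (by nlinarith)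
            (fun y hy => mul_sub_le_sub_of_hasDerivAt_Ici (fun t ht => hV t (hx0.trans ht))
              (hslope x · hx0) le_rfl hy)
            (hint.mono_set (Ici_subset_Ici.2 hx0))
      _ ≤ (x - m + 1) / x ^ 2 := div_le_div_of_nonneg_left (by linarith) (by positivity) hc

theorem u_tendsto_zero (n : ℕ) (hn : 2 ≤ n) (m : ℝ) (V : ℝ → ℝ)
    (hV0 : V 0 = 0)
    (hV : ∀ x : ℝ, 0 ≤ x → HasDerivAt V (x ^ n * ((n : ℝ) + 1 + Real.sin x)) x)
    (hVc : ContinuousOn (deriv V) (Set.Ici (0 : ℝ)))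
    (hint : IntegrableOn (fun y => (y - m) * Real.exp (-V y)) (Set.Ici (0 : ℝ))) :
    Tendsto (fun x : ℝ => Real.exp (V x) * ∫ y in Set.Ici x, (y - m) * Real.exp (-V y))
      atTop (nhds 0) :=
  u_tendsto_zero_general n hn m V hV hint
end
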